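/- arXiv:2407.20422 — 5 statements merged into one kernel-verified Lean document; each statement's English description precedes it below -/
import Mathlib

section
/- If strings s and t have overlap ov(s,t) (the longest string y such that s = xy and t = yz with x, z non-empty), and |ov(s,t)| ≥ max{|ov(s,t')|, |ov(s',t)|}, then |ov(s,t)| + |ov(s',t')| ≥ |ov(s,t')| + |ov(s',t)| (Monge inequality for overlaps). -/
/-- The length of the overlap of `s` and `t`: the longest `y` such that
`s = x ++ y` and `t = y ++ z` with `x, z` non-empty. -/
def ovLen {α : Type*} [DecidableEq α] (s t : List α) : ℕ :=
  Nat.findGreatest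
    (fun k => k < s.length ∧ k < t.length ∧ s.drop (s.length - k) = t.take k)
    (min s.length t.length)

/-- The overlap of `s` and `t`. -/
def ov {α : Type*} [DecidableEq α] (s t : List α) : List α :=
  t.take (ovLen s t)

lemma ovLen_le {α : Type*} [DecidableEq α] (s t : List α) :
    ovLen s t ≤ min s.length t.length :=
  Nat.findGreatest_le _

lemma ov_length {α : Type*} [DecidableEq α] (s t : List α) :
    (ov s t).length = ovLen s t := by
  simp only [ov, List.length_take]
  exact min_eq_left (le_trans (ovLen_le s t) (min_le_right _ _))

lemma ovLen_spec {α : Type*} [DecidableEq α] {s t : List α} (h : ovLen s t ≠ 0) :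
    ovLen s t < s.length ∧ ovLen s t < t.length ∧
      s.drop (s.length - ovLen s t) = t.take (ovLen s t) := by
  have := (Nat.findGreatest_eq_iff.1 (rfl :
    Nat.findGreatest (fun k => k < s.length ∧ k < t.length ∧
      s.drop (s.length - k) = t.take k) (min s.length t.length) = ovLen s t)).2.1 h
  exact this

/-- Monge inequality for overlaps. -/
theorem stmt_0 {α : Type*} [DecidableEq α] (s t s' t' : List α)
    (hne : ∀ x ∈ [s, t, s', t'], x ≠ ([] : List α))
    (hnosub : ∀ x ∈ [s, t, s', t'], ∀ y ∈ [s, t, s', t'], x ≠ y → ¬ x <:+: y)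
    (h : (ov s t).length ≥ max (ov s t').length (ov s' t).length) :
    (ov s t).length + (ov s' t').length ≥ (ov s t').length + (ov s' t).length := by
  simp only [ov_length] at h ⊢
  set m := ovLen s t with hm
  set p := ovLen s t' with hp
  set q := ovLen s' t with hq
  have hpm : p ≤ m := le_trans (le_max_left _ _) h
  have hqm : q ≤ m := le_trans (le_max_right _ _) h
  by_cases hle : p + q ≤ m
  · omega
  push_neg at hle
  -- k = p + q - m > 0
  set k := p + q - m with hk
  have hk0 : 0 < k := by omega
  have hp0 : p ≠ 0 := by omega
  have hq0 : q ≠ 0 := by omega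
  have hm0 : m ≠ 0 := by omega
  obtain ⟨hps, hpt, hpe⟩ := ovLen_spec hp0
  obtain ⟨hqs, hqt, hqe⟩ := ovLen_spec hq0
  obtain ⟨hms, hmt, hme⟩ := ovLen_spec hm0
  rw [← hm] at hms hmt hme
  rw [← hp] at hps hpt hpe
  rw [← hq] at hqs hqt hqe
  have hkq : k ≤ q := by omega
  have hkp : k ≤ p := by omega
  -- key string equality: s'.drop (s'.length - k) = t'.take k
  have key : s'.drop (s'.length - k) = t'.take k := by
    have e1 : s'.drop (s'.length - k) = (s'.drop (s'.length - q)).drop (q - k) := by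
      rw [List.drop_drop]
      congr 1
      omega
    have e2 : t'.take k = (t'.take p).take k := by
      rw [List.take_take, min_eq_left hkp]
    rw [e1, hqe, e2, ← hpe]
    have e3 : s.drop (s.length - p) = (s.drop (s.length - m)).drop (m - p) := by
      rw [List.drop_drop]
      congr 1
      omega
    rw [e3, hme]
    rw [List.drop_take, List.drop_take]
    have : q - k = m - p := by omega
    rw [this, List.take_take]
    congr 1
    omega
  have hkle : k ≤ ovLen s' t' := by
    apply Nat.le_findGreatest
    · exact le_min (le_trans hkq (le_of_lt hqs)) (le_trans hkp (le_of_lt hpt))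
    · exact ⟨lt_of_le_of_lt hkq hqs, lt_of_le_of_lt hkp hpt, key⟩
  omega
end

section
/- For any symbol p and strings u, v, w (none a substring of another), the number of occurrences of p in pref(u,v) plus the number in pref(v,w) is at least the number of occurrences of p in pref(u,w). -/
/-- The prefix part of `s` with respect to `t`: `s = pre s t ++ ov s t`. -/
def pre {α : Type*} [DecidableEq α] (s t : List α) : List α :=
  s.take (s.length - ovLen s t)

/-- The suffix part of `t` with respect to `s`: `t = ov s t ++ suf s t`. -/
def suf {α : Type*} [DecidableEq α] (s t : List α) : List α :=
  t.drop (ovLen s t)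

/-!
Gluing `pre u v ++ v = u ++ suf u v` and `pre v w ++ w = v ++ suf v w` gives
`x ++ w = u ++ suf u v ++ suf v w` with `x = pre u v ++ pre v w` non-empty. Since
`suf v w ≠ []`, `u` is a proper prefix of `x ++ w`, so the suffix of `u` of length
`|u| - |x|` is a prefix of `w`. Maximality of the overlap then forces `|pre u w| ≤ |x|`,
i.e. `pre u w` is a prefix of `x`, and counting occurrences is monotone under taking prefixes.
-/

namespace List

variable {α : Type*} [DecidableEq α] {s t x : List α}

theorem ovLen_spec (hs : s ≠ []) (ht : t ≠ []) :
    ovLen s t < s.length ∧ ovLen s t < t.length ∧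
      s.drop (s.length - ovLen s t) = t.take (ovLen s t) :=
  Nat.findGreatest_spec (P := fun k => k < s.length ∧ k < t.length ∧
      s.drop (s.length - k) = t.take k) (Nat.zero_le _)
    ⟨length_pos_iff.2 hs, length_pos_iff.2 ht, by simp⟩

theorem le_ovLen {k : ℕ} (hks : k < s.length) (hkt : k < t.length)
    (h : s.drop (s.length - k) = t.take k) : k ≤ ovLen s t :=
  Nat.le_findGreatest (by omega) ⟨hks, hkt, h⟩

theorem pre_ne_nil (hs : s ≠ []) (ht : t ≠ []) : pre s t ≠ [] := by
  have := (ovLen_spec hs ht).1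
  rw [pre, ne_eq, take_eq_nil_iff, not_or]
  exact ⟨by omega, hs⟩

theorem suf_ne_nil (hs : s ≠ []) (ht : t ≠ []) : suf s t ≠ [] := by
  have := (ovLen_spec hs ht).2.1
  rw [suf, ne_eq, drop_eq_nil_iff]
  omega

theorem pre_append_eq_append_suf (hs : s ≠ []) (ht : t ≠ []) :
    pre s t ++ t = s ++ suf s t := by
  have hov := (ovLen_spec hs ht).2.2
  calc pre s t ++ t = pre s t ++ (t.take (ovLen s t) ++ suf s t) := by
        rw [suf, take_append_drop]
    _ = s.take (s.length - ovLen s t) ++ s.drop (s.length - ovLen s t) ++ suf s t := by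
        rw [hov, append_assoc, pre]
    _ = s ++ suf s t := by rw [take_append_drop]

theorem pre_prefix_of_prefix_append (hx : x ≠ []) (hs : s <+: x ++ t)
    (hlen : s.length < x.length + t.length) : pre s t <+: x := by
  have hx_pos := length_pos_iff.2 hx
  have hs_take : s = (x ++ t).take s.length := prefix_iff_eq_take.1 hs
  have hle : s.length - ovLen s t ≤ x.length := by
    by_contra! hgt
    have hk : s.drop x.length = t.take (s.length - x.length) := by
      conv_lhs => rw [hs_take]
      rw [drop_take, drop_left]
    have := le_ovLen (s := s) (t := t) (k := s.length - x.length) (by omega) (by omega)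
      (by rwa [Nat.sub_sub_self (by omega)])
    omega
  rw [pre]
  conv_lhs => arg 2; rw [hs_take]
  rw [take_take, min_eq_left (by omega), take_append_of_le_length hle]
  exact take_prefix _ _

end List

open List in
theorem stmt_2_general {α : Type*} [DecidableEq α] (p : α) (u v w : List α)
    (hne : ∀ x ∈ [u, v, w], x ≠ ([] : List α)) :
    (pre u v).count p + (pre v w).count p ≥ (pre u w).count p := by
  have hu : u ≠ [] := hne u (by simp)
  have hv : v ≠ [] := hne v (by simp)
  have hw : w ≠ [] := hne w (by simp)
  have hglue : pre u v ++ pre v w ++ w = u ++ (suf u v ++ suf v w) := by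
    rw [append_assoc, pre_append_eq_append_suf hv hw, ← append_assoc,
      pre_append_eq_append_suf hu hv, append_assoc]
  have hlen : u.length < (pre u v ++ pre v w).length + w.length := by
    have := congrArg length hglue
    have := length_pos_iff.2 (suf_ne_nil hv hw)
    simp only [length_append] at *
    omega
  have hpre : pre u w <+: pre u v ++ pre v w :=
    pre_prefix_of_prefix_append (append_ne_nil_of_left_ne_nil (pre_ne_nil hu hv) _)
      ⟨_, hglue.symm⟩ hlen
  calc (pre u w).count p ≤ (pre u v ++ pre v w).count p := hpre.sublist.count_le p
    _ = (pre u v).count p + (pre v w).count p := count_append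

/-- Occurrence-counting triangle inequality for the prefix function. -/
theorem stmt_2 {α : Type*} [DecidableEq α] (p : α) (u v w : List α)
    (hne : ∀ x ∈ [u, v, w], x ≠ ([] : List α))
    (hnosub : ∀ x ∈ [u, v, w], ∀ y ∈ [u, v, w], x ≠ y → ¬ x <:+: y) :
    (pre u v).count p + (pre v w).count p ≥ (pre u w).count p :=
  stmt_2_general p u v w hne
end

section
/- Let C = v_1 → ... → v_k → v_1 be a cycle in the overlap graph, with length |C| = Σ_i |pref(v_i, v_{i+1 mod k})|, and let v = v_1. Then v is a prefix of w^∞ where w = pref(v_1,v_2)·pref(v_2,v_3)···pref(v_k,v_1), and consequently for any symbol p and positions l ≤ r ≤ |v| with r - l < |C|, the number of occurrences of p in v[l..r] is at most |C|_p := Σ_i |pref(v_i, v_{i+1 mod k})|_p. -/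
/-- A string is a prefix of the infinite periodic string `w^∞` iff it is a
prefix of `w^N` for some `N`. -/
def IsPrefixOfPower {α : Type*} (w s : List α) : Prop :=
  ∃ N : ℕ, s <+: (List.replicate N w).flatten

/-- The (1-indexed) substring `s[l..r]` of `s`. -/
def substr {α : Type*} (s : List α) (l r : ℕ) : List α :=
  (s.drop (l - 1)).take (r - l + 1)

/-! Since `s = pre s t ++ ov s t` and `ov s t` is a prefix of `t`, every `s` is a prefix of
`pre s t ++ t`. Chaining this once around the cycle gives `v 0 <+: w ++ v 0`, so `v 0` has
period `|w|` and is a prefix of a power of `w`. A window of length at most `|w|` in a power of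
`w` is a prefix of a rotation of `w`, hence contains each symbol at most as often as `w`. -/

section Overlap

variable {α : Type*} [DecidableEq α] (s t : List α)

theorem drop_sub_ovLen_eq_take_ovLen : s.drop (s.length - ovLen s t) = t.take (ovLen s t) := by
  rcases eq_or_ne (ovLen s t) 0 with h | h
  · simp [h]
  · exact ((Nat.findGreatest_eq_iff.1 rfl).2.1 h).2.2

theorem ovLen_lt_length {s : List α} (hs : s ≠ []) : ovLen s t < s.length := by
  rcases eq_or_ne (ovLen s t) 0 with h | h
  · simpa [h, List.length_pos_iff] using hs
  · exact ((Nat.findGreatest_eq_iff.1 rfl).2.1 h).1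

theorem pre_append_ov : pre s t ++ ov s t = s := by
  rw [pre, ov, ← drop_sub_ovLen_eq_take_ovLen, List.take_append_drop]

theorem prefix_pre_append : s <+: pre s t ++ t := by
  conv_lhs => rw [← pre_append_ov s t]
  exact (List.prefix_append_right_inj _).2 (List.take_prefix _ _)

theorem pre_ne_nil {s : List α} (hs : s ≠ []) : pre s t ≠ [] := by
  have := ovLen_lt_length t hs
  simp only [pre, ne_eq, List.take_eq_nil_iff, hs, or_false]
  omega

theorem prefix_flatten_pre_append (u : ℕ → List α) (j : ℕ) :
    u 0 <+: (List.ofFn fun i : Fin j => pre (u i) (u (i + 1))).flatten ++ u j := by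
  induction j with
  | zero => simp
  | succ j ih =>
    rw [List.ofFn_succ', List.concat_eq_append, List.flatten_append, List.flatten_singleton,
      List.append_assoc]
    exact ih.trans ((List.prefix_append_right_inj _).2 (prefix_pre_append _ _))

end Overlap

section Periodic

variable {α : Type*} {s w : List α}

theorem prefix_flatten_replicate_append (h : s <+: w ++ s) (N : ℕ) :
    s <+: (List.replicate N w).flatten ++ s := by
  induction N with
  | zero => simp
  | succ N ih =>
    rw [List.replicate_succ', List.flatten_append, List.flatten_singleton, List.append_assoc]
    exact ih.trans ((List.prefix_append_right_inj _).2 h)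

theorem prefix_flatten_replicate (h : s <+: w ++ s) {N : ℕ} (hN : s.length ≤ N * w.length) :
    s <+: (List.replicate N w).flatten :=
  List.prefix_of_prefix_length_le (prefix_flatten_replicate_append h N) (List.prefix_append _ _)
    (by simpa using hN)

theorem take_drop_eq_of_prefix {t : List α} (h : s <+: t) {q L : ℕ} (hqL : q + L ≤ s.length) :
    (s.drop q).take L = (t.drop q).take L := by
  rw [List.prefix_iff_eq_take.1 h, List.take_drop, List.take_drop, List.take_take,
    min_eq_left hqL]

theorem count_take_drop_flatten_replicate_le [BEq α] (w : List α) {q L N : ℕ}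
    (hL : L ≤ w.length) (hN : q / w.length + 2 ≤ N) (p : α) :
    (((List.replicate N w).flatten.drop q).take L).count p ≤ w.count p := by
  obtain rfl | hw := eq_or_ne w []
  · simp_all
  set a := q / w.length
  set m := q % w.length
  have hm : m < w.length := Nat.mod_lt _ (List.length_pos_iff.2 hw)
  obtain ⟨M, rfl⟩ : ∃ M, N = a + (M + 2) := ⟨N - a - 2, by omega⟩
  have hdrop : (List.replicate (a + (M + 2)) w).flatten.drop q
      = w.rotate m ++ (w.drop m ++ (List.replicate M w).flatten) := by
    have hq : q = a * w.length + m := (Nat.div_add_mod' q w.length).symm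
    rw [hq, ← List.drop_drop, List.replicate_add, List.flatten_append,
      List.drop_left' (by simp), List.replicate_succ, List.replicate_succ, List.flatten_cons,
      List.flatten_cons, List.drop_append_of_le_length hm.le,
      List.rotate_eq_drop_append_take hm.le, List.append_assoc, ← List.append_assoc (w.take m),
      List.take_append_drop]
  calc (((List.replicate _ w).flatten.drop q).take L).count p
      = ((w.rotate m).take L).count p := by
        rw [hdrop, List.take_append_of_le_length (by simpa using hL)]
    _ ≤ (w.rotate m).count p := (List.take_sublist _ _).count_le p
    _ = w.count p := (List.rotate_perm w m).count_eq p

end Periodic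

theorem stmt_6_general {α : Type*} [DecidableEq α] (k : ℕ) [NeZero k]
    (v : Fin k → List α)
    (hne : ∀ i, v i ≠ ([] : List α)) :
    ∀ w : List α, w = (List.ofFn (fun i : Fin k => pre (v i) (v (i + 1)))).flatten →
    IsPrefixOfPower w (v 0) ∧
    ∀ (p : α) (l r : ℕ), 1 ≤ l → l ≤ r → r ≤ (v 0).length →
      r - l < w.length →
      (substr (v 0) l r).count p ≤
        ∑ i : Fin k, (pre (v i) (v (i + 1))).count p := by
  intro w hw
  have hcycle : v 0 <+: w ++ v 0 := by
    have hsucc (i : Fin k) : Fin.ofNat k (i + 1) = i + 1 := by ext; simp [Fin.val_add]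
    simpa only [hw, hsucc, Fin.ofNat_val_eq_self, Fin.ofNat_self, Fin.ofNat_zero] using
      prefix_flatten_pre_append (fun n => v (Fin.ofNat k n)) k
  have hw_ne : w ≠ [] := by
    rw [hw, ne_eq, List.flatten_eq_nil_iff]
    exact fun h => pre_ne_nil _ (hne 0) (h _ (List.mem_ofFn.2 ⟨0, rfl⟩))
  have hpow : v 0 <+: (List.replicate ((v 0).length + 2) w).flatten :=
    prefix_flatten_replicate hcycle (by nlinarith [List.length_pos_iff.2 hw_ne])
  refine ⟨⟨_, hpow⟩, fun p l r hl hlr hr hrw => ?_⟩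
  have hcount : w.count p = ∑ i : Fin k, (pre (v i) (v (i + 1))).count p := by
    rw [hw, List.count_flatten, List.map_ofFn, List.sum_ofFn]
    rfl
  rw [substr, take_drop_eq_of_prefix hpow (by omega), ← hcount]
  exact count_take_drop_flatten_replicate_le w (by omega)
    (by have := Nat.div_le_self (l - 1) w.length; omega) p

/-- For a cycle `v_1 → ... → v_k → v_1` in the overlap graph, `v_1` is a
prefix of `w^∞` with `w = pref(v_1,v_2)···pref(v_k,v_1)`, and any window of
`v_1` shorter than `|C|` has at most `|C|_p` occurrences of any symbol `p`. -/
theorem stmt_6 {α : Type*} [DecidableEq α] (k : ℕ) [NeZero k]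
    (v : Fin k → List α)
    (hne : ∀ i, v i ≠ ([] : List α))
    (hnosub : ∀ i j, v i ≠ v j → ¬ v i <:+: v j) :
    ∀ w : List α, w = (List.ofFn (fun i : Fin k => pre (v i) (v (i + 1)))).flatten →
    IsPrefixOfPower w (v 0) ∧
    ∀ (p : α) (l r : ℕ), 1 ≤ l → l ≤ r → r ≤ (v 0).length →
      r - l < w.length →
      (substr (v 0) l r).count p ≤
        ∑ i : Fin k, (pre (v i) (v (i + 1))).count p :=
  stmt_6_general k v hne
end

section
/- In a complete directed weighted graph with self-loops satisfying the Monge property (if w(u,v) ≥ max{w(u,v'), w(u',v)} then w(u,v)+w(u',v') ≥ w(u,v')+w(u',v)), any cycle cover constructed by greedily processing edges in a dominance-respecting order (rejecting an edge iff it is dominated by an already chosen edge) is a maximum-weight cycle cover. -/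
/-!
Cycle covers are the graphs of permutations. When CYC accepts an edge `e = (u, v)`, every edge
sharing an endpoint with `e` that is compatible with the edges accepted so far weighs at most
`w u v`: a heavier one would come earlier in the order, hence be dominated by an accepted edge,
which would then share an endpoint with `e`. So in a maximum-weight cover containing the
accepted edges, the edges leaving `u` and entering `v` weigh at most `w u v`, and by the Monge
property rerouting them through `(u, v)` loses no weight. Thus the accepted edges always lie in
a maximum-weight cover; at the end every edge is dominated by an accepted one, which forces the
accepted set to be that whole cover.
-/

open scoped Classical

/-- Edge `e` dominates `e'` if they share a tail or a head and `e` has at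
least as large weight. -/
def Dominates {V : Type*} (w : V → V → ℝ) (e e' : V × V) : Prop :=
  (e'.1 = e.1 ∨ e'.2 = e.2) ∧ w e'.1 e'.2 ≤ w e.1 e.2

/-- Strict domination. -/
def StrictlyDominates {V : Type*} (w : V → V → ℝ) (e e' : V × V) : Prop :=
  (e'.1 = e.1 ∨ e'.2 = e.2) ∧ w e'.1 e'.2 < w e.1 e.2

/-- The Monge property: if `(u,v)` dominates `(u,v')` and `(u',v)`, then
`w(u,v) + w(u',v') ≥ w(u,v') + w(u',v)`. -/
def MongeProp {V : Type*} (w : V → V → ℝ) : Prop :=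
  ∀ u v u' v', w u v' ≤ w u v → w u' v ≤ w u v →
    w u v' + w u' v ≤ w u v + w u' v'

/-- A cycle cover: every node has in-degree 1 and out-degree 1. -/
def IsCycleCover {V : Type*} [Fintype V] [DecidableEq V] (C : Finset (V × V)) : Prop :=
  ∀ v : V, (C.filter (fun e => e.1 = v)).card = 1 ∧
    (C.filter (fun e => e.2 = v)).card = 1

/-- Total weight of an edge set. -/
noncomputable def edgeWeight {V : Type*} (w : V → V → ℝ) (C : Finset (V × V)) : ℝ :=
  ∑ e ∈ C, w e.1 e.2

/-- The greedy algorithm CYC: process edges in order, rejecting an edge iff it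
is dominated by an already chosen edge. -/
noncomputable def greedyCC {V : Type*} [DecidableEq V] (w : V → V → ℝ) :
    List (V × V) → Finset (V × V) → Finset (V × V)
  | [], acc => acc
  | e :: rest, acc =>
      if ∃ e' ∈ acc, Dominates w e' e then greedyCC w rest acc
      else greedyCC w rest (insert e acc)

/-- A dominance-respecting order on the list of all edges. -/
def DomRespecting {V : Type*} [Fintype V] [DecidableEq V] (w : V → V → ℝ)
    (L : List (V × V)) : Prop :=
  L.Nodup ∧ (∀ e : V × V, e ∈ L) ∧
  ∀ e e' : V × V, StrictlyDominates w e e' → L.idxOf e ≤ L.idxOf e'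

open Equiv Finset

section DominanceOrder

variable {V : Type*} [Fintype V] [DecidableEq V] {w : V → V → ℝ} {L P rest : List (V × V)}
  {e : V × V}

theorem DomRespecting.idxOf_eq_length (hL : DomRespecting w L) (hPL : L = P ++ e :: rest) :
    L.idxOf e = P.length := by
  have heP : e ∉ P := by
    have := hPL ▸ hL.1
    exact fun h => List.disjoint_of_nodup_append this h List.mem_cons_self
  rw [hPL, List.idxOf_append_of_notMem heP, List.idxOf_cons_self, add_zero]

theorem DomRespecting.mem_of_strictlyDominates (hL : DomRespecting w L)
    (hPL : L = P ++ e :: rest) {e' : V × V} (h : StrictlyDominates w e' e) : e' ∈ P := by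
  have hprefix : P ++ [e] <+: L := ⟨rest, by simp [hPL]⟩
  have hlt : L.idxOf e' < (P ++ [e]).length := by
    have := hL.2.2 e' e h
    rw [hL.idxOf_eq_length hPL] at this
    simpa using Nat.lt_succ_of_le this
  have hne : e' ≠ e := by rintro rfl; exact lt_irrefl _ h.2
  simpa [hne] using (hprefix.mem_iff_idxOf_lt_length e').2 hlt

theorem DomRespecting.not_strictlyDominates (hL : DomRespecting w L)
    (hPL : L = P ++ e :: rest) {f : V × V} (hf : f ∈ P) : ¬ StrictlyDominates w e f := by
  intro h
  have hprefix : P <+: L := ⟨e :: rest, hPL.symm⟩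
  have := hL.2.2 e f h
  rw [hL.idxOf_eq_length hPL] at this
  exact absurd ((hprefix.mem_iff_idxOf_lt_length f).1 hf) (not_lt.2 this)

end DominanceOrder

section PermGraph

variable {V : Type*} [Fintype V] [DecidableEq V]

def permGraph (σ : Perm V) : Finset (V × V) :=
  univ.image fun x => (x, σ x)

@[simp]
theorem mem_permGraph {σ : Perm V} {p : V × V} : p ∈ permGraph σ ↔ σ p.1 = p.2 := by
  constructor
  · simp +contextual [permGraph, eq_comm]
  · exact fun h => mem_image.2 ⟨p.1, mem_univ _, by rw [h]⟩

theorem eq_of_mem_permGraph {σ : Perm V} {f g : V × V} (hf : f ∈ permGraph σ)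
    (hg : g ∈ permGraph σ) (hfg : f.1 = g.1 ∨ f.2 = g.2) : f = g := by
  rw [mem_permGraph] at hf hg
  have h1 : f.1 = g.1 := hfg.elim id fun h => σ.injective (by rw [hf, hg, h])
  exact Prod.ext h1 (by rw [← hf, ← hg, h1])

theorem permGraph_subset_permGraph {σ τ : Perm V} (h : permGraph σ ⊆ permGraph τ) : σ = τ :=
  Equiv.ext fun x => (mem_permGraph.1 (h (mem_permGraph.2 (rfl : σ (x, σ x).1 = σ x)))).symm

theorem isCycleCover_permGraph (σ : Perm V) : IsCycleCover (permGraph σ) := by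
  intro v
  constructor
  · convert card_singleton (v, σ v)
    ext ⟨x, y⟩
    simp only [mem_filter, mem_permGraph, mem_singleton, Prod.mk.injEq]
    constructor <;> rintro ⟨rfl, rfl⟩ <;> simp
  · convert card_singleton (σ.symm v, v)
    ext ⟨x, y⟩
    simp only [mem_filter, mem_permGraph, mem_singleton, Prod.mk.injEq]
    constructor <;> rintro ⟨rfl, rfl⟩ <;> simp

theorem IsCycleCover.exists_perm {C : Finset (V × V)} (hC : IsCycleCover C) :
    ∃ σ : Perm V, C = permGraph σ := by
  have hout v : ∃! a, a ∈ C ∧ a.1 = v := by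
    simpa using card_eq_one_iff_existsUnique.1 (hC v).1
  have hin v : ∃! a, a ∈ C ∧ a.2 = v := by
    simpa using card_eq_one_iff_existsUnique.1 (hC v).2
  choose g hg hgu using hout
  have hgC x : (x, (g x).2) ∈ C := (Prod.ext (hg x).2.symm rfl : (x, (g x).2) = g x) ▸ (hg x).1
  have hinj : Function.Injective fun x => (g x).2 := fun x y hxy =>
    congrArg Prod.fst ((hin _).unique ⟨hgC x, rfl⟩ ⟨hgC y, hxy.symm⟩)
  refine ⟨Equiv.ofBijective _ hinj.bijective_of_finite, ?_⟩
  ext ⟨x, y⟩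
  simp only [mem_permGraph, Equiv.ofBijective_apply]
  refine ⟨fun h => ?_, fun h => h ▸ hgC x⟩
  rw [← hgu x (x, y) ⟨h, rfl⟩]

theorem edgeWeight_permGraph (w : V → V → ℝ) (σ : Perm V) :
    edgeWeight w (permGraph σ) = ∑ x, w x (σ x) :=
  sum_image fun _ _ _ _ h => congrArg Prod.fst h

end PermGraph

theorem MongeProp.exists_perm_apply_eq {V : Type*} [Fintype V] [DecidableEq V] {w : V → V → ℝ}
    (hmonge : MongeProp w) (σ : Perm V) {u v : V} (hu : w u (σ u) ≤ w u v)
    (hv : w (σ.symm v) v ≤ w u v) :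
    ∃ τ : Perm V, τ u = v ∧ (∀ x, x ≠ u → σ x ≠ v → τ x = σ x) ∧
      ∑ x, w x (σ x) ≤ ∑ x, w x (τ x) := by
  set u' := σ.symm v
  have hσu' : σ u' = v := σ.apply_symm_apply v
  refine ⟨σ * swap u u', by simp [hσu'], fun x hxu hxv => ?_, ?_⟩
  · have hxu' : x ≠ u' := by rintro rfl; exact hxv hσu'
    simp [swap_apply_of_ne_of_ne hxu hxu']
  by_cases huu' : u = u'
  · simp [huu']
  have hrest : ∀ x ∈ (univ.erase u).erase u', w x ((σ * swap u u') x) = w x (σ x) := by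
    intro x hx
    simp only [mem_erase] at hx
    simp [swap_apply_of_ne_of_ne hx.2.1 hx.1]
  have hmem : u' ∈ univ.erase u := mem_erase.2 ⟨Ne.symm huu', mem_univ _⟩
  rw [← add_sum_erase _ _ (mem_univ u), ← add_sum_erase _ _ hmem,
    ← add_sum_erase _ _ (mem_univ u), ← add_sum_erase _ _ hmem, sum_congr rfl hrest]
  have := hmonge u v u' (σ u) hu hv
  simp only [Perm.mul_apply, swap_apply_left, swap_apply_right, hσu']
  linarith

section Greedy

variable {V : Type*} [Fintype V] [DecidableEq V] {w : V → V → ℝ} {L P rest : List (V × V)}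
  {acc : Finset (V × V)} {e : V × V}

/-- Invariant of CYC after processing the prefix `P` of the order, `acc` being the edges
accepted so far. -/
structure GreedyInv (w : V → V → ℝ) (P : List (V × V)) (acc : Finset (V × V)) : Prop where
  subset : ∀ f ∈ acc, f ∈ P
  dominated : ∀ e ∈ P, ∃ f ∈ acc, Dominates w f e
  extends_optimal : ∀ σ : Perm V, ∃ τ : Perm V, acc ⊆ permGraph τ ∧
    ∑ x, w x (σ x) ≤ ∑ x, w x (τ x)

theorem greedyInv_nil : GreedyInv w [] ∅ :=
  ⟨by simp, by simp, fun σ => ⟨σ, empty_subset _, le_rfl⟩⟩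

theorem GreedyInv.append_of_dominated (h : GreedyInv w P acc)
    (he : ∃ f ∈ acc, Dominates w f e) : GreedyInv w (P ++ [e]) acc where
  subset f hf := List.mem_append_left _ (h.subset f hf)
  dominated e' he' := by
    rcases List.mem_append.1 he' with he' | he'
    · exact h.dominated e' he'
    · rwa [List.mem_singleton.1 he']
  extends_optimal := h.extends_optimal

theorem GreedyInv.disjoint_of_not_dominated (hL : DomRespecting w L)
    (hPL : L = P ++ e :: rest) (h : GreedyInv w P acc) (he : ¬ ∃ f ∈ acc, Dominates w f e) :
    ∀ f ∈ acc, f.1 ≠ e.1 ∧ f.2 ≠ e.2 := by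
  intro f hf
  by_contra hfe
  have hshare : e.1 = f.1 ∨ e.2 = f.2 := by tauto
  rcases le_or_gt (w e.1 e.2) (w f.1 f.2) with hle | hlt
  · exact he ⟨f, hf, hshare, hle⟩
  · exact hL.not_strictlyDominates hPL (h.subset f hf) ⟨hshare.imp Eq.symm Eq.symm, hlt⟩

theorem GreedyInv.weight_le_of_disjoint (hL : DomRespecting w L) (hPL : L = P ++ e :: rest)
    (h : GreedyInv w P acc) (hdisj : ∀ f ∈ acc, f.1 ≠ e.1 ∧ f.2 ≠ e.2) {τ : Perm V}
    (hacc : acc ⊆ permGraph τ) {g : V × V} (hg : g ∈ permGraph τ)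
    (hge : e.1 = g.1 ∨ e.2 = g.2) :
    w g.1 g.2 ≤ w e.1 e.2 := by
  by_contra! hlt
  obtain ⟨f, hf, hfg, -⟩ := h.dominated g (hL.mem_of_strictlyDominates hPL ⟨hge, hlt⟩)
  have hfg : f = g := eq_of_mem_permGraph (hacc hf) hg (hfg.imp Eq.symm Eq.symm)
  subst hfg
  have := hdisj f hf
  tauto

theorem GreedyInv.append_insert (hmonge : MongeProp w) (hL : DomRespecting w L)
    (hPL : L = P ++ e :: rest) (h : GreedyInv w P acc) (he : ¬ ∃ f ∈ acc, Dominates w f e) :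
    GreedyInv w (P ++ [e]) (insert e acc) where
  subset f hf := by
    rcases mem_insert.1 hf with rfl | hf
    · simp
    · exact List.mem_append_left _ (h.subset f hf)
  dominated e' he' := by
    rcases List.mem_append.1 he' with he' | he'
    · obtain ⟨f, hf, hdom⟩ := h.dominated e' he'
      exact ⟨f, mem_insert_of_mem hf, hdom⟩
    · exact ⟨e, mem_insert_self _ _, Or.inl (by rw [List.mem_singleton.1 he']), by
        rw [List.mem_singleton.1 he']⟩
  extends_optimal σ := by
    have hdisj := h.disjoint_of_not_dominated hL hPL he
    obtain ⟨τ, hacc, hστ⟩ := h.extends_optimal σ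
    obtain ⟨τ', hτ'e, hτ'τ, hττ'⟩ := hmonge.exists_perm_apply_eq τ
      (h.weight_le_of_disjoint hL hPL hdisj hacc (g := (e.1, τ e.1)) (by simp) (Or.inl rfl))
      (h.weight_le_of_disjoint hL hPL hdisj hacc (g := (τ.symm e.2, e.2)) (by simp) (Or.inr rfl))
    refine ⟨τ', insert_subset (mem_permGraph.2 hτ'e) fun f hf => ?_, hστ.trans hττ'⟩
    have hfτ := mem_permGraph.1 (hacc hf)
    rw [mem_permGraph, hτ'τ _ (hdisj f hf).1 (hfτ ▸ (hdisj f hf).2), hfτ]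

theorem greedyInv_greedyCC (hmonge : MongeProp w) (hL : DomRespecting w L) :
    ∀ (rest P : List (V × V)) (acc : Finset (V × V)), L = P ++ rest → GreedyInv w P acc →
      GreedyInv w L (greedyCC w rest acc)
  | [], P, acc, hPL, h => by rwa [greedyCC, hPL, List.append_nil]
  | e :: rest, P, acc, hPL, h => by
    have hPL' : L = (P ++ [e]) ++ rest := by simp [hPL]
    rw [greedyCC]
    split_ifs with he
    · exact greedyInv_greedyCC hmonge hL rest _ _ hPL' (h.append_of_dominated he)
    · exact greedyInv_greedyCC hmonge hL rest _ _ hPL' (h.append_insert hmonge hL hPL he)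

theorem GreedyInv.eq_permGraph (hL : DomRespecting w L) (h : GreedyInv w L acc) {τ : Perm V}
    (hacc : acc ⊆ permGraph τ) : acc = permGraph τ := by
  refine Subset.antisymm hacc fun g hg => ?_
  obtain ⟨f, hf, hshare, -⟩ := h.dominated g (hL.2.1 g)
  rwa [eq_of_mem_permGraph (hacc hf) hg (hshare.imp Eq.symm Eq.symm)] at hf

end Greedy

theorem stmt_8_general {V : Type*} [Fintype V] [DecidableEq V] (w : V → V → ℝ)
    (hmonge : MongeProp w)
    (L : List (V × V)) (hL : DomRespecting w L) :
    IsCycleCover (greedyCC w L ∅) ∧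
    ∀ C' : Finset (V × V), IsCycleCover C' →
      edgeWeight w C' ≤ edgeWeight w (greedyCC w L ∅) := by
  have hinv := greedyInv_greedyCC hmonge hL L [] ∅ rfl greedyInv_nil
  obtain ⟨π, hπ, -⟩ := hinv.extends_optimal 1
  have hA : greedyCC w L ∅ = permGraph π := hinv.eq_permGraph hL hπ
  refine ⟨hA ▸ isCycleCover_permGraph π, fun C' hC' => ?_⟩
  obtain ⟨σ, rfl⟩ := hC'.exists_perm
  obtain ⟨τ, hτ, hστ⟩ := hinv.extends_optimal σ
  rw [hA] at hτ ⊢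
  rw [edgeWeight_permGraph, edgeWeight_permGraph, permGraph_subset_permGraph hτ]
  exact hστ

/-- Greedy processing of edges in a dominance-respecting order yields a
maximum-weight cycle cover. -/
theorem stmt_8 {V : Type*} [Fintype V] [DecidableEq V] (w : V → V → ℝ)
    (hw : ∀ u v : V, 0 ≤ w u v) (hmonge : MongeProp w)
    (L : List (V × V)) (hL : DomRespecting w L) :
    IsCycleCover (greedyCC w L ∅) ∧
    ∀ C' : Finset (V × V), IsCycleCover C' →
      edgeWeight w C' ≤ edgeWeight w (greedyCC w L ∅) :=
  stmt_8_general w hmonge L hL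
end

section
/- The exchange step preserving weight: in a graph satisfying the Monge property, if C' is a maximum-weight cycle cover and an edge (u,v) not in C' dominates both edges (u,v') ∈ C' and (u',v) ∈ C', then replacing (u,v') and (u',v) by (u,v) and (u',v') yields a cycle cover of weight at least that of C'. -/
open scoped Classical

/-! Swapping `(u,v'), (u',v)` for `(u,v), (u',v')` keeps the multiset of tails `{u, u'}` and of
heads `{v, v'}`, so every in- and out-degree is unchanged; and the weight changes by
`w u v + w u' v' - w u v' - w u' v`, which is nonnegative by the Monge
property because `(u,v)` dominates both removed edges. -/

section SwapEdges

variable {V : Type*} [DecidableEq V]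

def swapEdges (C : Finset (V × V)) (u v u' v' : V) : Finset (V × V) :=
  insert (u, v) (insert (u', v') ((C.erase (u, v')).erase (u', v)))

variable {C : Finset (V × V)} {u v u' v' : V}

lemma sum_swapEdges_add {β : Type*} [AddCommMonoid β] (f : V × V → β)
    (huv : (u, v) ∉ C) (hu'v' : (u', v') ∉ C) (huv' : (u, v') ∈ C) (hu'v : (u', v) ∈ C)
    (huu' : u ≠ u') :
    ∑ e ∈ swapEdges C u v u' v', f e + (f (u, v') + f (u', v)) =
      ∑ e ∈ C, f e + (f (u, v) + f (u', v')) := by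
  have hu'v_erase : (u', v) ∈ C.erase (u, v') := by simp [hu'v, huu'.symm]
  have huv_new : (u, v) ∉ insert (u', v') ((C.erase (u, v')).erase (u', v)) := by
    simp [huu', huv]
  have hu'v'_new : (u', v') ∉ (C.erase (u, v')).erase (u', v) := by simp [hu'v']
  rw [swapEdges, Finset.sum_insert huv_new, Finset.sum_insert hu'v'_new,
    ← Finset.add_sum_erase _ _ huv', ← Finset.add_sum_erase _ _ hu'v_erase]
  abel

lemma card_filter_swapEdges_add (p : V × V → Prop) [DecidablePred p]
    (huv : (u, v) ∉ C) (hu'v' : (u', v') ∉ C) (huv' : (u, v') ∈ C) (hu'v : (u', v) ∈ C)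
    (huu' : u ≠ u') :
    ((swapEdges C u v u' v').filter p).card +
        ((if p (u, v') then 1 else 0) + (if p (u', v) then 1 else 0)) =
      (C.filter p).card + ((if p (u, v) then 1 else 0) + (if p (u', v') then 1 else 0)) := by
  simp only [Finset.card_filter]
  exact sum_swapEdges_add _ huv hu'v' huv' hu'v huu'

variable [Fintype V]

lemma IsCycleCover.eq_of_fst_eq (hC : IsCycleCover C) {e e' : V × V} (he : e ∈ C)
    (he' : e' ∈ C) (h : e.1 = e'.1) : e = e' :=
  Finset.card_le_one.mp (hC e'.1).1.le e (by simp [he, h]) e' (by simp [he'])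

lemma IsCycleCover.notMem_of_swap (hC : IsCycleCover C) (huv : (u, v) ∉ C)
    (huv' : (u, v') ∈ C) (hu'v : (u', v) ∈ C) : (u', v') ∉ C := fun h => by
  cases hC.eq_of_fst_eq h hu'v rfl
  exact huv huv'

lemma IsCycleCover.swapEdges (hC : IsCycleCover C) (huv : (u, v) ∉ C)
    (huv' : (u, v') ∈ C) (hu'v : (u', v) ∈ C) : IsCycleCover (swapEdges C u v u' v') := by
  have huu' : u ≠ u' := by rintro rfl; exact huv hu'v
  have hu'v' := hC.notMem_of_swap huv huv' hu'v
  intro x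
  constructor
  · have := card_filter_swapEdges_add (fun e => e.1 = x) huv hu'v' huv' hu'v huu'
    simp only [(hC x).1] at this
    omega
  · have := card_filter_swapEdges_add (fun e => e.2 = x) huv hu'v' huv' hu'v huu'
    simp only [(hC x).2] at this
    omega

lemma IsCycleCover.edgeWeight_swapEdges_add (hC : IsCycleCover C) (w : V → V → ℝ)
    (huv : (u, v) ∉ C) (huv' : (u, v') ∈ C) (hu'v : (u', v) ∈ C) :
    edgeWeight w (_root_.swapEdges C u v u' v') + (w u v' + w u' v) =
      edgeWeight w C + (w u v + w u' v') := by
  have huu' : u ≠ u' := by rintro rfl; exact huv hu'v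
  exact sum_swapEdges_add (fun e => w e.1 e.2) huv (hC.notMem_of_swap huv huv' hu'v) huv'
    hu'v huu'

end SwapEdges

theorem stmt_9_general {V : Type*} [Fintype V] [DecidableEq V] (w : V → V → ℝ)
    (hmonge : MongeProp w)
    (C' : Finset (V × V)) (hcc : IsCycleCover C')
    (u v u' v' : V)
    (huv : (u, v) ∉ C') (huv' : (u, v') ∈ C') (hu'v : (u', v) ∈ C')
    (hdom1 : Dominates w (u, v) (u, v'))
    (hdom2 : Dominates w (u, v) (u', v)) :
    IsCycleCover (insert (u, v) (insert (u', v')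
        ((C'.erase (u, v')).erase (u', v)))) ∧
    edgeWeight w C' ≤ edgeWeight w (insert (u, v) (insert (u', v')
        ((C'.erase (u, v')).erase (u', v)))) := by
  refine ⟨hcc.swapEdges huv huv' hu'v, ?_⟩
  show edgeWeight w C' ≤ edgeWeight w (swapEdges C' u v u' v')
  have hweight := hcc.edgeWeight_swapEdges_add w huv huv' hu'v
  have hmonge_swap := hmonge u v u' v' hdom1.2 hdom2.2
  linarith

/-- The exchange step: if an unused edge `(u,v)` dominates both incident edges
`(u,v')` and `(u',v)` of a maximum-weight cycle cover `C'`, swapping them for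
`(u,v)` and `(u',v')` again yields a cycle cover of at least the same weight. -/
theorem stmt_9 {V : Type*} [Fintype V] [DecidableEq V] (w : V → V → ℝ)
    (hw : ∀ u v : V, 0 ≤ w u v) (hmonge : MongeProp w)
    (C' : Finset (V × V)) (hcc : IsCycleCover C')
    (hmax : ∀ C'' : Finset (V × V), IsCycleCover C'' →
      edgeWeight w C'' ≤ edgeWeight w C')
    (u v u' v' : V)
    (huv : (u, v) ∉ C') (huv' : (u, v') ∈ C') (hu'v : (u', v) ∈ C')
    (hdom1 : Dominates w (u, v) (u, v'))
    (hdom2 : Dominates w (u, v) (u', v)) :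
    IsCycleCover (insert (u, v) (insert (u', v')
        ((C'.erase (u, v')).erase (u', v)))) ∧
    edgeWeight w C' ≤ edgeWeight w (insert (u, v) (insert (u', v')
        ((C'.erase (u, v')).erase (u', v)))) :=
  stmt_9_general w hmonge C' hcc u v u' v' huv huv' hu'v hdom1 hdom2
end
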